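/- Let v₁, …, vₛ ∈ ℝˢ span ℝˢ, and for each j let Bⱼ be a symmetric positive semidefinite matrix with 0 < ‖Bⱼ‖₂ ≤ 1 and Bⱼ/‖Bⱼ‖₂ the orthogonal projector onto span(vⱼ). Then the spectral norm of the product A = (I − Bₛ)(I − B_{s−1})⋯(I − B₁) satisfies ‖A‖₂ < 1. -/

import Mathlib

open Matrix
open scoped InnerProductSpace

/-!
Write `I - Bⱼ = I - cⱼ Pⱼ` with `cⱼ = ‖Bⱼ‖₂ ∈ (0, 1]` and `Pⱼ` the orthogonal projection onto
`span vⱼ`. Then `‖(I - cⱼ Pⱼ) x‖² = ‖x‖² - cⱼ (2 - cⱼ) ‖Pⱼ x‖²`, so each factor is nonexpansive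
and preserves `‖x‖` only when `Pⱼ x = 0`, in which case it fixes `x`. Hence if `‖A x‖ = ‖x‖`,
every factor fixes `x`, so `x ⊥ vⱼ` for all `j` and `x = 0`. In finite dimension the operator
norm is attained on the unit sphere, so `‖A‖₂ < 1`.
-/

namespace List

variable {𝕜 E : Type*} [Semiring 𝕜] [SeminormedAddCommGroup E] [Module 𝕜 E]

theorem norm_prod_apply_le {l : List (E →L[𝕜] E)} (h : ∀ T ∈ l, ∀ y, ‖T y‖ ≤ ‖y‖) (x : E) :
    ‖l.prod x‖ ≤ ‖x‖ := by
  induction l with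
  | nil => simp
  | cons T l ih =>
    rw [forall_mem_cons] at h
    exact (h.1 _).trans (ih h.2)

theorem prod_apply_eq_self {l : List (E →L[𝕜] E)} {x : E} (h : ∀ T ∈ l, T x = x) :
    l.prod x = x :=
  (MulAction.stabilizerSubmonoid (E →L[𝕜] E) x).list_prod_mem h

theorem forall_apply_eq_self_of_norm_prod_apply_eq {l : List (E →L[𝕜] E)}
    (hle : ∀ T ∈ l, ∀ y, ‖T y‖ ≤ ‖y‖) (hrigid : ∀ T ∈ l, ∀ y, ‖T y‖ = ‖y‖ → T y = y)
    {x : E} (hx : ‖l.prod x‖ = ‖x‖) : ∀ T ∈ l, T x = x := by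
  induction l with
  | nil => simp
  | cons T l ih =>
    rw [forall_mem_cons] at hle hrigid ⊢
    rw [prod_cons, mul_apply_eq_comp] at hx
    have hnorm : ‖l.prod x‖ = ‖x‖ :=
      (norm_prod_apply_le hle.2 x).antisymm (hx ▸ hle.1 _)
    have hfix := ih hle.2 hrigid.2 hnorm
    rw [prod_apply_eq_self hfix] at hx
    exact ⟨hrigid.1 x hx, hfix⟩

end List

theorem ContinuousLinearMap.opNorm_lt_of_forall_norm_apply_lt {E F : Type*}
    [NormedAddCommGroup E] [NormedSpace ℝ E] [FiniteDimensional ℝ E]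
    [SeminormedAddCommGroup F] [NormedSpace ℝ F] (T : E →L[ℝ] F) {C : ℝ} (hC : 0 < C)
    (h : ∀ x ≠ 0, ‖T x‖ < C * ‖x‖) : ‖T‖ < C := by
  rcases subsingleton_or_nontrivial E with _ | _
  · rwa [T.opNorm_subsingleton]
  obtain ⟨x₀, hx₀, hmax⟩ := (isCompact_sphere (0 : E) 1).exists_isMaxOn
    (NormedSpace.sphere_nonempty.2 zero_le_one) (continuous_norm.comp T.continuous).continuousOn
  rw [mem_sphere_zero_iff_norm] at hx₀
  calc ‖T‖ ≤ ‖T x₀‖ := T.opNorm_le_of_unit_norm (norm_nonneg _)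
        fun x hx => hmax (mem_sphere_zero_iff_norm.2 hx)
    _ < C := by simpa [hx₀] using h x₀ (norm_ne_zero_iff.1 (hx₀ ▸ one_ne_zero))

theorem eq_zero_of_forall_inner_eq_zero_of_span_eq_top {𝕜 E ι : Type*} [RCLike 𝕜]
    [NormedAddCommGroup E] [InnerProductSpace 𝕜 E] {v : ι → E}
    (hspan : Submodule.span 𝕜 (Set.range v) = ⊤) {x : E} (h : ∀ i, ⟪v i, x⟫_𝕜 = 0) : x = 0 := by
  have hortho : Submodule.span 𝕜 (Set.range v) ⟂ 𝕜 ∙ x := by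
    simpa [Submodule.isOrtho_span] using h
  rwa [hspan, Submodule.isOrtho_top_left, Submodule.span_singleton_eq_bot] at hortho

namespace LinearMap.IsSymmetricProjection

variable {E : Type*} [NormedAddCommGroup E] [InnerProductSpace ℝ E] {P : E →ₗ[ℝ] E}

theorem inner_self_apply (hP : P.IsSymmetricProjection) (x : E) : ⟪x, P x⟫_ℝ = ‖P x‖ ^ 2 := by
  calc ⟪x, P x⟫_ℝ = ⟪x, P (P x)⟫_ℝ := by rw [← Module.End.mul_apply, hP.isIdempotentElem.eq]
    _ = ‖P x‖ ^ 2 := by rw [← hP.isSymmetric, real_inner_self_eq_norm_sq]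

theorem norm_sub_smul_apply_sq (hP : P.IsSymmetricProjection) (c : ℝ) (x : E) :
    ‖x - c • P x‖ ^ 2 = ‖x‖ ^ 2 - c * (2 - c) * ‖P x‖ ^ 2 := by
  rw [norm_sub_sq_real, real_inner_smul_right, hP.inner_self_apply, norm_smul, mul_pow,
    Real.norm_eq_abs, sq_abs]
  ring

theorem norm_sub_smul_apply_le (hP : P.IsSymmetricProjection) {c : ℝ} (hc₀ : 0 ≤ c) (hc₂ : c ≤ 2)
    (x : E) : ‖x - c • P x‖ ≤ ‖x‖ := by
  have hsq := hP.norm_sub_smul_apply_sq c x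
  have hdefect : 0 ≤ c * (2 - c) * ‖P x‖ ^ 2 := by have := sub_nonneg.2 hc₂; positivity
  exact pow_le_pow_iff_left₀ (norm_nonneg _) (norm_nonneg _) two_ne_zero |>.1 (by linarith)

theorem apply_eq_zero_of_norm_sub_smul_apply_eq (hP : P.IsSymmetricProjection) {c : ℝ}
    (hc₀ : 0 < c) (hc₂ : c < 2) {x : E} (hx : ‖x - c • P x‖ = ‖x‖) : P x = 0 := by
  have hsq := hP.norm_sub_smul_apply_sq c x
  rw [hx] at hsq
  have hPx : c * (2 - c) * ‖P x‖ ^ 2 = 0 := by linarith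
  rw [mul_eq_zero, pow_eq_zero_iff two_ne_zero, norm_eq_zero] at hPx
  exact hPx.resolve_left (by have := sub_pos.2 hc₂; positivity)

end LinearMap.IsSymmetricProjection

theorem Matrix.mem_range_toEuclideanCLM_iff {𝕜 n : Type*} [RCLike 𝕜] [Fintype n] [DecidableEq n]
    (M : Matrix n n 𝕜) (x : EuclideanSpace 𝕜 n) :
    x ∈ LinearMap.range (toEuclideanCLM (𝕜 := 𝕜) M : EuclideanSpace 𝕜 n →ₗ[𝕜] EuclideanSpace 𝕜 n) ↔
      x.ofLp ∈ LinearMap.range M.mulVecLin := by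
  constructor
  · rintro ⟨u, rfl⟩
    exact ⟨u.ofLp, rfl⟩
  · rintro ⟨u, hu⟩
    refine ⟨WithLp.toLp 2 u, ?_⟩
    rw [ContinuousLinearMap.coe_coe, toEuclideanCLM_toLp, ← mulVecLin_apply, hu, WithLp.toLp_ofLp]

theorem norm_list_prod_one_sub_smul_lt_one {ι E : Type*} [NormedAddCommGroup E]
    [InnerProductSpace ℝ E] [FiniteDimensional ℝ E] {P : ι → E →L[ℝ] E}
    (hP : ∀ i, (P i : E →ₗ[ℝ] E).IsSymmetricProjection) {c : ι → ℝ} (hc₀ : ∀ i, 0 < c i)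
    (hc₂ : ∀ i, c i < 2) {v : ι → E} (hv : ∀ i, v i ∈ LinearMap.range (P i : E →ₗ[ℝ] E))
    (hspan : Submodule.span ℝ (Set.range v) = ⊤) {l : List ι} (hl : ∀ i, i ∈ l) :
    ‖(l.map fun i => 1 - c i • P i).prod‖ < 1 := by
  have hle : ∀ T ∈ l.map fun i => 1 - c i • P i, ∀ y, ‖T y‖ ≤ ‖y‖ := by
    simpa using fun i _ y => (hP i).norm_sub_smul_apply_le (hc₀ i).le (hc₂ i).le y
  have hrigid : ∀ T ∈ l.map fun i => 1 - c i • P i, ∀ y, ‖T y‖ = ‖y‖ → T y = y := by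
    simp only [List.forall_mem_map]
    intro i _ y hy
    have hPy : P i y = 0 :=
      (hP i).apply_eq_zero_of_norm_sub_smul_apply_eq (hc₀ i) (hc₂ i) (by simpa using hy)
    simp [hPy]
  refine ContinuousLinearMap.opNorm_lt_of_forall_norm_apply_lt _ one_pos fun x hx => ?_
  rw [one_mul]
  refine (List.norm_prod_apply_le hle x).lt_of_ne fun hnorm => hx ?_
  have hfix := List.forall_apply_eq_self_of_norm_prod_apply_eq hle hrigid hnorm
  refine eq_zero_of_forall_inner_eq_zero_of_span_eq_top hspan fun i => ?_
  have hPx : P i x = 0 := (hP i).apply_eq_zero_of_norm_sub_smul_apply_eq (hc₀ i) (hc₂ i)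
    (by simpa using congrArg norm (hfix _ (List.mem_map_of_mem (hl i))))
  exact Submodule.inner_right_of_mem_orthogonal (hv i) ((hP i).isSymmetric.orthogonal_range ▸ hPx)

/-- If `v₁, …, vₛ` span `ℝˢ` and each `Bⱼ` is symmetric PSD with `0 < ‖Bⱼ‖₂ ≤ 1` and
`Bⱼ/‖Bⱼ‖₂` the orthogonal projector onto `span(vⱼ)`, then the product
`A = (I - Bₛ)⋯(I - B₁)` has spectral norm `‖A‖₂ < 1`. -/
theorem product_of_relaxed_projections_contraction (s : ℕ)
    (v : Fin s → EuclideanSpace ℝ (Fin s))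
    (hspan : Submodule.span ℝ (Set.range v) = ⊤)
    (B : Fin s → Matrix (Fin s) (Fin s) ℝ)
    (hpsd : ∀ j, (B j).PosSemidef)
    (hpos : ∀ j, 0 < ‖Matrix.toEuclideanCLM (𝕜 := ℝ) (B j)‖)
    (hle : ∀ j, ‖Matrix.toEuclideanCLM (𝕜 := ℝ) (B j)‖ ≤ 1)
    (hidem : ∀ j, (‖Matrix.toEuclideanCLM (𝕜 := ℝ) (B j)‖⁻¹ • B j)
        * (‖Matrix.toEuclideanCLM (𝕜 := ℝ) (B j)‖⁻¹ • B j)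
      = ‖Matrix.toEuclideanCLM (𝕜 := ℝ) (B j)‖⁻¹ • B j)
    (hrange : ∀ j,
      LinearMap.range (‖Matrix.toEuclideanCLM (𝕜 := ℝ) (B j)‖⁻¹ • B j).mulVecLin
        = Submodule.span ℝ {fun i => v j i}) :
    ‖Matrix.toEuclideanCLM (𝕜 := ℝ)
        ((List.ofFn (fun j : Fin s => (1 : Matrix (Fin s) (Fin s) ℝ) - B j)).reverse.prod)‖
      < 1 := by
  set c : Fin s → ℝ := fun j => ‖toEuclideanCLM (𝕜 := ℝ) (B j)‖
  set P := fun j => toEuclideanCLM (𝕜 := ℝ) ((c j)⁻¹ • B j)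
  have hP j : (P j : EuclideanSpace ℝ (Fin s) →ₗ[ℝ] _).IsSymmetricProjection :=
    ContinuousLinearMap.isStarProjection_iff_isSymmetricProjection.1 <| IsStarProjection.map
      ⟨hidem j, (IsSelfAdjoint.all _).smul (hpsd j).isHermitian.isSelfAdjoint⟩ toEuclideanCLM
  have hv j : v j ∈ LinearMap.range (P j : EuclideanSpace ℝ (Fin s) →ₗ[ℝ] _) :=
    (mem_range_toEuclideanCLM_iff _ _).2 (hrange j ▸ Submodule.mem_span_singleton_self _)
  have hfactor j : toEuclideanCLM (𝕜 := ℝ) (1 - B j) = 1 - c j • P j := by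
    have hc : c j ≠ 0 := (hpos j).ne'
    simp only [P, map_sub, map_one, map_smul, smul_smul, mul_inv_cancel₀ hc, one_smul]
  have hprod : toEuclideanCLM (𝕜 := ℝ) (List.ofFn fun j => 1 - B j).reverse.prod =
      ((List.finRange s).reverse.map fun j => 1 - c j • P j).prod := by
    simp only [map_list_prod, List.ofFn_eq_map, List.map_reverse, List.map_map, Function.comp_def,
      hfactor]
  rw [hprod]
  exact norm_list_prod_one_sub_smul_lt_one hP hpos (fun j => (hle j).trans_lt one_lt_two) hv hspan
    (by simp)
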